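/- arXiv:2402.16179 — 9 statements merged into one kernel-verified Lean document; each statement's English description precedes it below -/
import Mathlib

section
/- Let p be a prime, let L be a field of characteristic p with algebraic closure L̄, let α, β ∈ L, and let d ≥ 2 be an integer. Suppose that at least one of the following holds: (1) both α and β are algebraic over the prime field 𝔽_p; (2) d = p^ℓ for some positive integer ℓ and β − α is algebraic over 𝔽_p; (3) α^d = β^d. Then for every λ ∈ L̄, α is preperiodic under f_λ(x) = x^d + λ if and only if β is preperiodic under f_λ. -/
open Polynomial

section AuxPrep

private lemma iter_stab' {α : Type*} (g : α → α) (x : α) {m n : ℕ} (hmn : m < n)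
    (h : g^[m] x = g^[n] x) :
    ∀ M, m ≤ M → ∀ j, g^[M + j * (n - m)] x = g^[M] x := by
  have key : ∀ A, m ≤ A → g^[A + (n - m)] x = g^[A] x := by
    intro A hA
    obtain ⟨c, rfl⟩ := Nat.exists_eq_add_of_le hA
    have h1 : m + c + (n - m) = c + n := by omega
    have h2 : m + c = c + m := by omega
    rw [h1, Function.iterate_add_apply, ← h, ← Function.iterate_add_apply, h2]
  intro M hM j
  induction j with
  | zero => simp
  | succ j ih =>
      have h3 : M + (j + 1) * (n - m) = M + j * (n - m) + (n - m) := by ring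
      rw [h3, key _ (by omega), ih]

private lemma pow_iter' {K : Type*} [Monoid K] (c : K) (d : ℕ) :
    ∀ N, (fun y : K => y ^ d)^[N] c = c ^ d ^ N := by
  intro N
  induction N with
  | zero => simp
  | succ N ih => rw [Function.iterate_succ_apply', ih, ← pow_mul, ← pow_succ]

variable {k K : Type*} [Field k] [Field K] [Algebra k K]

private lemma finite_adjoin' [Finite k] {s : Set K} (hs : s.Finite)
    (h : ∀ x ∈ s, IsIntegral k x) : Finite (Algebra.adjoin k s) := by
  haveI : Module.Finite k (Algebra.adjoin k s) :=
    Module.Finite.iff_fg.mpr (fg_adjoin_of_finite hs h)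
  exact Module.finite_of_finite k

private lemma pigeon' (u : ℕ → K) (S : Subalgebra k K) (hS : Finite S)
    (hu : ∀ n, u n ∈ S) : ∃ a b, a < b ∧ u a = u b := by
  obtain ⟨a, b, hab, h⟩ := Finite.exists_ne_map_eq_of_infinite (fun n => (⟨u n, hu n⟩ : S))
  have h' : u a = u b := congrArg Subtype.val h
  rcases hab.lt_or_gt with h'' | h''
  exacts [⟨a, b, h'', h'⟩, ⟨b, a, h'', h'.symm⟩]

private lemma prep_of_integral' [Finite k] (d : ℕ) (lam x : K)
    (hx : IsIntegral k x) (hlam : IsIntegral k lam) :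
    ∃ m n : ℕ, m < n ∧ (fun y : K => y ^ d + lam)^[m] x = (fun y : K => y ^ d + lam)^[n] x := by
  set S := Algebra.adjoin k ({x, lam} : Set K) with hSdef
  haveI hfin : Finite S := finite_adjoin' (Set.toFinite _) (by
    intro y hy
    rcases hy with rfl | rfl
    exacts [hx, hlam])
  have horb : ∀ N, (fun y : K => y ^ d + lam)^[N] x ∈ S := by
    intro N
    induction N with
    | zero => exact Algebra.subset_adjoin (by simp)
    | succ N ih =>
        rw [Function.iterate_succ_apply']
        exact S.add_mem (S.pow_mem ih d) (Algebra.subset_adjoin (by simp))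
  exact pigeon' _ S hfin horb

private lemma integral_lam_of_prep' (d : ℕ) (hd : 2 ≤ d) (lam x : K) (hx : IsIntegral k x)
    {m n : ℕ} (hmn : m < n)
    (h : (fun y : K => y ^ d + lam)^[m] x = (fun y : K => y ^ d + lam)^[n] x) :
    IsIntegral k lam := by
  set R := Algebra.adjoin k ({x} : Set K) with hR
  let g : ℕ → K[X] := fun N => Nat.rec (C x) (fun _ P => P ^ d + X) N
  have hg0 : g 0 = C x := rfl
  have heval : ∀ N, (g N).eval lam = (fun y : K => y ^ d + lam)^[N] x := by
    intro N
    induction N with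
    | zero => simp [hg0]
    | succ N ih =>
        rw [Function.iterate_succ_apply']
        show (g N ^ d + X).eval lam = _
        rw [eval_add, eval_pow, eval_X, ih]
  have hmonic : ∀ N, (g (N + 1)).Monic ∧ (g (N + 1)).degree = ((d ^ N : ℕ) : WithBot ℕ) := by
    intro N
    induction N with
    | zero =>
        have h1 : (C x ^ d + X : K[X]) = X + C (x ^ d) := by rw [← C_pow]; ring
        constructor
        · show (C x ^ d + X : K[X]).Monic
          rw [h1]; exact monic_X_add_C _
        · show (C x ^ d + X : K[X]).degree = ((d ^ 0 : ℕ) : WithBot ℕ)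
          rw [h1, degree_X_add_C]; simp
    | succ N ih =>
        obtain ⟨hm, hdeg⟩ := ih
        have hnd : (g (N + 1)).natDegree = d ^ N := natDegree_eq_of_degree_eq_some hdeg
        have hPd : ((g (N + 1)) ^ d).Monic := hm.pow d
        have hndPd : ((g (N + 1)) ^ d).natDegree = d ^ (N + 1) := by
          rw [hm.natDegree_pow, hnd, ← pow_succ']
        have hdegPd : ((g (N + 1)) ^ d).degree = ((d ^ (N + 1) : ℕ) : WithBot ℕ) := by
          rw [degree_eq_natDegree hPd.ne_zero, hndPd]
        have hXlt : (X : K[X]).degree < ((g (N + 1)) ^ d).degree := by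
          rw [hdegPd, degree_X]
          exact_mod_cast Nat.one_lt_pow (Nat.succ_ne_zero N) hd
        constructor
        · show ((g (N + 1)) ^ d + X).Monic
          exact hPd.add_of_left hXlt
        · show ((g (N + 1)) ^ d + X).degree = ((d ^ (N + 1) : ℕ) : WithBot ℕ)
          rw [degree_add_eq_left_of_degree_lt hXlt, hdegPd]
  have hlift : ∀ N, g N ∈ Polynomial.lifts (algebraMap R K) := by
    intro N
    induction N with
    | zero => exact C_mem_lifts (algebraMap R K) (⟨x, Algebra.subset_adjoin rfl⟩ : R)
    | succ N ih =>
        show g N ^ d + X ∈ Polynomial.lifts (algebraMap R K)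
        exact add_mem (pow_mem ih d) (X_mem_lifts _)
  obtain ⟨n', rfl⟩ : ∃ n', n = n' + 1 := ⟨n - 1, by omega⟩
  obtain ⟨Qn, hQnmap, hQndeg, hQnmonic⟩ :=
    lifts_and_degree_eq_and_monic (hlift (n' + 1)) (hmonic n').1
  obtain ⟨Qm, hQmmap⟩ := (mem_lifts _).1 (hlift m)
  have hinj : Function.Injective (algebraMap R K) := Subtype.val_injective
  have hdegQm : Qm.degree = (g m).degree := by
    rw [← hQmmap, degree_map_eq_of_injective hinj]
  have hlt : (g m).degree < (g (n' + 1)).degree := by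
    rw [(hmonic n').2]
    rcases Nat.eq_zero_or_pos m with rfl | hm
    · calc (g 0).degree ≤ 0 := by rw [hg0]; exact degree_C_le
        _ < ((d ^ n' : ℕ) : WithBot ℕ) := by
          exact_mod_cast pow_pos (by omega : 0 < d) n'
    · obtain ⟨m', rfl⟩ : ∃ m', m = m' + 1 := ⟨m - 1, by omega⟩
      rw [(hmonic m').2]
      exact_mod_cast Nat.pow_lt_pow_right (by omega : 1 < d) (by omega)
  have hQmonic : (Qn - Qm).Monic := by
    refine hQnmonic.sub_of_left ?_
    rw [hdegQm, hQndeg]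
    exact hlt
  have hroot : eval₂ (algebraMap R K) lam (Qn - Qm) = 0 := by
    calc eval₂ (algebraMap R K) lam (Qn - Qm)
        = (g (n' + 1)).eval lam - (g m).eval lam := by
          rw [eval₂_eq_eval_map, Polynomial.map_sub, hQnmap, hQmmap, eval_sub]
      _ = 0 := by rw [heval (n' + 1), heval m, ← h, sub_self]
  haveI : Module.Finite k R := Module.Finite.iff_fg.mpr hx.fg_adjoin_singleton
  exact isIntegral_trans lam ⟨Qn - Qm, hQmonic, hroot⟩

private lemma prep_add' [Finite k] (p ℓ : ℕ) [Fact p.Prime] [CharP K p] (hℓ : 0 < ℓ)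
    (lam x c : K) (hc : IsIntegral k c)
    (h : ∃ m n : ℕ, m < n ∧
      (fun y : K => y ^ p ^ ℓ + lam)^[m] x = (fun y : K => y ^ p ^ ℓ + lam)^[n] x) :
    ∃ m n : ℕ, m < n ∧
      (fun y : K => y ^ p ^ ℓ + lam)^[m] (x + c)
        = (fun y : K => y ^ p ^ ℓ + lam)^[n] (x + c) := by
  haveI : ExpChar K p := ExpChar.prime Fact.out
  set d := p ^ ℓ with hdd
  set f := fun y : K => y ^ d + lam with hf
  have hfrob : ∀ u v : K, (u + v) ^ d = u ^ d + v ^ d := by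
    intro u v
    rw [hdd]
    exact add_pow_char_pow u v p ℓ
  have key : ∀ N, f^[N] (x + c) = f^[N] x + c ^ d ^ N := by
    intro N
    induction N with
    | zero => simp
    | succ N ih =>
        rw [Function.iterate_succ_apply', Function.iterate_succ_apply', ih]
        show (f^[N] x + c ^ d ^ N) ^ d + lam = f^[N] x ^ d + lam + c ^ d ^ (N + 1)
        rw [hfrob, ← pow_mul, ← pow_succ]
        exact add_right_comm _ _ _
  have hpowmem : ∀ N, c ^ d ^ N ∈ Algebra.adjoin k ({c} : Set K) := fun N =>
    pow_mem (Algebra.self_mem_adjoin_singleton k c) _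
  haveI hfin : Finite (Algebra.adjoin k ({c} : Set K)) :=
    finite_adjoin' (Set.finite_singleton c) (by rintro y rfl; exact hc)
  obtain ⟨a, b, hab, hcab⟩ := pigeon' (fun N => c ^ d ^ N) _ hfin hpowmem
  obtain ⟨m, n, hmn, hx'⟩ := h
  set M := max m a with hM
  have h1 : f^[M + (b - a) * (n - m)] x = f^[M] x :=
    iter_stab' f x hmn hx' M (le_max_left _ _) (b - a)
  have hgc : (fun y : K => y ^ d)^[a] c = (fun y : K => y ^ d)^[b] c := by
    rw [pow_iter', pow_iter']; exact hcab
  have h2 : (fun y : K => y ^ d)^[M + (n - m) * (b - a)] c = (fun y : K => y ^ d)^[M] c :=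
    iter_stab' _ c hab hgc M (le_max_right _ _) (n - m)
  refine ⟨M, M + (b - a) * (n - m), ?_, ?_⟩
  · have : 0 < (b - a) * (n - m) := Nat.mul_pos (by omega) (by omega)
    omega
  · rw [key, key, h1]
    congr 1
    rw [← pow_iter', ← pow_iter']
    have hco : M + (b - a) * (n - m) = M + (n - m) * (b - a) := by ring
    rw [hco, h2]

private lemma prep_of_pow_eq' (d : ℕ) (lam u v : K) (huv : u ^ d = v ^ d)
    (h : ∃ m n : ℕ, m < n ∧
      (fun y : K => y ^ d + lam)^[m] u = (fun y : K => y ^ d + lam)^[n] u) :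
    ∃ m n : ℕ, m < n ∧
      (fun y : K => y ^ d + lam)^[m] v = (fun y : K => y ^ d + lam)^[n] v := by
  set f := fun y : K => y ^ d + lam with hf
  obtain ⟨m, n, hmn, h⟩ := h
  have hstep : f u = f v := by show u ^ d + lam = v ^ d + lam; rw [huv]
  refine ⟨m + 1, n + 1, by omega, ?_⟩
  rw [Function.iterate_succ_apply, Function.iterate_succ_apply, ← hstep]
  rw [← Function.iterate_succ_apply, ← Function.iterate_succ_apply]
  rw [Function.iterate_succ_apply', Function.iterate_succ_apply', h]

end AuxPrep

/-- If (1) both `α, β ∈ L` are algebraic over `𝔽_p`, or (2) `d` is a positive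
power of `p = char L` and `β - α` is algebraic over `𝔽_p`, or (3) `α^d = β^d`, then for every
`λ` in the algebraic closure of `L`, `α` is preperiodic under `f_λ(x) = x^d + λ` iff `β` is. -/
theorem preperiodic_iff_of_special_relation
    (p : ℕ) [Fact p.Prime] (L : Type*) [Field L] [CharP L p] [Algebra (ZMod p) L]
    (α β : L) (d : ℕ) (hd : 2 ≤ d)
    (hspecial : (IsAlgebraic (ZMod p) α ∧ IsAlgebraic (ZMod p) β) ∨
        (∃ ℓ : ℕ, 0 < ℓ ∧ d = p ^ ℓ ∧ IsAlgebraic (ZMod p) (β - α)) ∨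
        α ^ d = β ^ d) :
    ∀ lam : AlgebraicClosure L,
      ((∃ m n : ℕ, m < n ∧
          (fun x : AlgebraicClosure L => x ^ d + lam)^[m] (algebraMap L (AlgebraicClosure L) α)
            = (fun x : AlgebraicClosure L => x ^ d + lam)^[n]
                (algebraMap L (AlgebraicClosure L) α))
        ↔ (∃ m n : ℕ, m < n ∧
          (fun x : AlgebraicClosure L => x ^ d + lam)^[m] (algebraMap L (AlgebraicClosure L) β)
            = (fun x : AlgebraicClosure L => x ^ d + lam)^[n]
                (algebraMap L (AlgebraicClosure L) β))) := by
  intro lam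
  haveI : CharP (AlgebraicClosure L) p :=
    charP_of_injective_algebraMap (algebraMap L (AlgebraicClosure L)).injective p
  rcases hspecial with ⟨ha, hb⟩ | ⟨ℓ, hℓ, hdp, hγ⟩ | heq
  · -- case 1 : both algebraic over the prime field
    have ha' : IsIntegral (ZMod p) (algebraMap L (AlgebraicClosure L) α) :=
      (ha.isIntegral).map (IsScalarTower.toAlgHom (ZMod p) L (AlgebraicClosure L))
    have hb' : IsIntegral (ZMod p) (algebraMap L (AlgebraicClosure L) β) :=
      (hb.isIntegral).map (IsScalarTower.toAlgHom (ZMod p) L (AlgebraicClosure L))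
    constructor
    · rintro ⟨m, n, hmn, h⟩
      exact prep_of_integral' d lam _ hb' (integral_lam_of_prep' d hd lam _ ha' hmn h)
    · rintro ⟨m, n, hmn, h⟩
      exact prep_of_integral' d lam _ ha' (integral_lam_of_prep' d hd lam _ hb' hmn h)
  · -- case 2 : d is a power of p and β - α is algebraic over the prime field
    subst hdp
    have hc : IsIntegral (ZMod p)
        (algebraMap L (AlgebraicClosure L) β - algebraMap L (AlgebraicClosure L) α) := by
      have := (hγ.isIntegral).map (IsScalarTower.toAlgHom (ZMod p) L (AlgebraicClosure L))
      rwa [map_sub] at this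
    constructor
    · intro h
      have := prep_add' p ℓ hℓ lam (algebraMap L (AlgebraicClosure L) α)
        (algebraMap L (AlgebraicClosure L) β - algebraMap L (AlgebraicClosure L) α) hc h
      rwa [add_sub_cancel] at this
    · intro h
      have hc' : IsIntegral (ZMod p)
          (algebraMap L (AlgebraicClosure L) α - algebraMap L (AlgebraicClosure L) β) := by
        have := hc.neg
        rwa [neg_sub] at this
      have := prep_add' p ℓ hℓ lam (algebraMap L (AlgebraicClosure L) β)
        (algebraMap L (AlgebraicClosure L) α - algebraMap L (AlgebraicClosure L) β) hc' h
      rwa [add_sub_cancel] at this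
  · -- case 3 : α ^ d = β ^ d
    have he : (algebraMap L (AlgebraicClosure L) α) ^ d
        = (algebraMap L (AlgebraicClosure L) β) ^ d := by
      rw [← map_pow, ← map_pow, heq]
    exact ⟨prep_of_pow_eq' d lam _ _ he, prep_of_pow_eq' d lam _ _ he.symm⟩
end

section
/- Let p be a prime, let F be a field of characteristic p, let d ≥ 2 be an integer, let γ ∈ F be algebraic over the prime field 𝔽_p, and let λ ∈ F. Then γ is preperiodic under f_λ(x) = x^d + λ if and only if λ is algebraic over 𝔽_p. -/
private noncomputable def iterPoly {K : Type*} [Field K] (c : K) (d : ℕ) : ℕ → Polynomial K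
  | 0 => Polynomial.C c
  | n + 1 => (iterPoly c d n) ^ d + Polynomial.X

private lemma iterPoly_aeval {K F : Type*} [Field K] [Field F] [Algebra K F]
    (c : K) (d : ℕ) (lam : F) :
    ∀ n, Polynomial.aeval lam (iterPoly c d n)
      = (fun x : F => x ^ d + lam)^[n] (algebraMap K F c)
  | 0 => by simp [iterPoly]
  | n + 1 => by
    rw [Function.iterate_succ_apply']
    simp [iterPoly, iterPoly_aeval c d lam n]

private lemma iterPoly_monic {K : Type*} [Field K] (c : K) (d : ℕ) (hd : 2 ≤ d) :
    ∀ n, (iterPoly c d (n + 1)).Monic ∧ (iterPoly c d (n + 1)).natDegree = d ^ n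
  | 0 => by
    have : iterPoly c d 1 = Polynomial.X + Polynomial.C (c ^ d) := by
      simp [iterPoly, add_comm]
    rw [this]
    refine ⟨Polynomial.monic_X_add_C _, ?_⟩
    rw [Polynomial.natDegree_X_add_C]; simp
  | n + 1 => by
    obtain ⟨hm, hdeg⟩ := iterPoly_monic c d hd n
    have hpow : ((iterPoly c d (n + 1)) ^ d).Monic := hm.pow d
    have hpdeg : ((iterPoly c d (n + 1)) ^ d).natDegree = d ^ (n + 1) := by
      rw [Polynomial.natDegree_pow, hdeg, pow_succ, mul_comm]
    have hlt : (Polynomial.X : Polynomial K).degree < ((iterPoly c d (n + 1)) ^ d).degree := by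
      rw [Polynomial.degree_eq_natDegree hpow.ne_zero, hpdeg, Polynomial.degree_X]
      exact_mod_cast lt_of_lt_of_le hd (by
        calc d = d ^ 1 := (pow_one d).symm
        _ ≤ d ^ (n + 1) := pow_le_pow_right₀ (le_trans one_le_two hd) (by omega))
    constructor
    · show ((iterPoly c d (n + 1)) ^ d + Polynomial.X).Monic
      exact hpow.add_of_left hlt
    · show ((iterPoly c d (n + 1)) ^ d + Polynomial.X).natDegree = d ^ (n + 1)
      rw [Polynomial.natDegree_add_eq_left_of_degree_lt hlt, hpdeg]

/-- In a field `F` of characteristic `p`, if `γ` is algebraic over `𝔽_p`, then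
`γ` is preperiodic under `f_λ(x) = x^d + λ` iff `λ` is algebraic over `𝔽_p`. -/
theorem preperiodic_iff_param_algebraic
    (p : ℕ) [Fact p.Prime] (F : Type*) [Field F] [CharP F p] [Algebra (ZMod p) F]
    (d : ℕ) (hd : 2 ≤ d) (γ lam : F) (hγ : IsAlgebraic (ZMod p) γ) :
    (∃ m n : ℕ, m < n ∧
        (fun x : F => x ^ d + lam)^[m] γ = (fun x : F => x ^ d + lam)^[n] γ)
      ↔ IsAlgebraic (ZMod p) lam := by
  constructor
  · rintro ⟨m, n, hmn, h⟩
    -- K = 𝔽_p(γ)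
    set K := IntermediateField.adjoin (ZMod p) ({γ} : Set F) with hK
    have hγK : γ ∈ K := IntermediateField.subset_adjoin _ _ (by simp)
    have hfin : FiniteDimensional (ZMod p) K :=
      IntermediateField.adjoin.finiteDimensional hγ.isIntegral
    have hKalg : Algebra.IsIntegral (ZMod p) K := Algebra.IsIntegral.of_finite _ _
    set c : K := ⟨γ, hγK⟩ with hc
    have hmapc : algebraMap K F c = γ := rfl
    have heval : ∀ k, Polynomial.aeval lam (iterPoly c d k)
        = (fun x : F => x ^ d + lam)^[k] γ := by
      intro k; rw [iterPoly_aeval, hmapc]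
    have hne : iterPoly c d n ≠ iterPoly c d m := by
      obtain ⟨n', rfl⟩ : ∃ n', n = n' + 1 := ⟨n - 1, by omega⟩
      rcases Nat.eq_zero_or_pos m with hm0 | hmpos
      · subst hm0
        intro hEq
        have h1 := (iterPoly_monic c d hd n').2
        rw [hEq] at h1
        simp only [iterPoly, Polynomial.natDegree_C] at h1
        have : 1 ≤ d ^ n' := Nat.one_le_pow _ _ (by omega)
        omega
      · obtain ⟨m', rfl⟩ : ∃ m', m = m' + 1 := ⟨m - 1, by omega⟩
        intro hEq
        have h1 := (iterPoly_monic c d hd n').2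
        have h2 := (iterPoly_monic c d hd m').2
        rw [hEq, h2] at h1
        have : d ^ m' < d ^ n' := Nat.pow_lt_pow_right (by omega) (by omega)
        omega
    have : IsAlgebraic K lam := by
      refine ⟨iterPoly c d n - iterPoly c d m, sub_ne_zero_of_ne hne, ?_⟩
      rw [map_sub, heval, heval, ← h, sub_self]
    have : IsIntegral K lam := this.isIntegral
    exact (isIntegral_trans (R := ZMod p) lam this).isAlgebraic
  · intro hlam
    set K := IntermediateField.adjoin (ZMod p) ({γ, lam} : Set F) with hK
    have hγK : γ ∈ K := IntermediateField.subset_adjoin _ _ (by simp)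
    have hlamK : lam ∈ K := IntermediateField.subset_adjoin _ _ (by simp)
    have hfin : FiniteDimensional (ZMod p) K := by
      apply IntermediateField.finiteDimensional_adjoin
      rintro x hx
      rcases hx with rfl | rfl
      · exact hγ.isIntegral
      · exact hlam.isIntegral
    have hfinite : Finite K := Module.finite_of_finite (ZMod p)
    set g : K → K := fun x => x ^ d + ⟨lam, hlamK⟩ with hg
    have hcomm : ∀ k, (fun x : F => x ^ d + lam)^[k] γ = ((g^[k] ⟨γ, hγK⟩ : K) : F) := by
      intro k
      induction k with
      | zero => rfl
      | succ k ih =>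
        rw [Function.iterate_succ_apply', Function.iterate_succ_apply', ih]
        push_cast [hg]
        rfl
    obtain ⟨a, b, hab, heq⟩ := Finite.exists_ne_map_eq_of_infinite
      (fun k : ℕ => g^[k] (⟨γ, hγK⟩ : K))
    rcases lt_or_gt_of_ne hab with hlt | hgt
    · exact ⟨a, b, hlt, by rw [hcomm, hcomm, heq]⟩
    · exact ⟨b, a, hgt, by rw [hcomm, hcomm, heq]⟩
end

section
/- Let p be a prime, let F be a field of characteristic p, let ℓ be a positive integer and set d = p^ℓ. Let α, β ∈ F be such that α − β is algebraic over the prime field 𝔽_p. Then for every λ ∈ F, α is preperiodic under f_λ(x) = x^d + λ if and only if β is preperiodic under f_λ. -/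
section Aux

variable {p : ℕ} [Fact p.Prime] {F : Type*} [Field F] [CharP F p]

/-- The iterates of `x ↦ x^d + λ` satisfy `f^[n] x - f^[n] y = (x-y)^(d^n)` when `d = p^ℓ`. -/
lemma aux_iter_sub (ℓ : ℕ) (d : ℕ) (hd : d = p ^ ℓ) (lam : F) :
    ∀ (n : ℕ) (x y : F),
      (fun x : F => x ^ d + lam)^[n] x - (fun x : F => x ^ d + lam)^[n] y
        = (x - y) ^ d ^ n := by
  intro n
  induction n with
  | zero => intro x y; simp
  | succ n ih =>
    intro x y
    rw [Function.iterate_succ_apply', Function.iterate_succ_apply']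
    show ((fun x : F => x ^ d + lam)^[n] x) ^ d + lam
        - (((fun x : F => x ^ d + lam)^[n] y) ^ d + lam) = _
    have h1 : ((fun x : F => x ^ d + lam)^[n] x) ^ d + lam
        - (((fun x : F => x ^ d + lam)^[n] y) ^ d + lam)
        = ((fun x : F => x ^ d + lam)^[n] x - (fun x : F => x ^ d + lam)^[n] y) ^ d := by
      subst hd
      rw [sub_pow_char_pow]
      ring
    rw [h1, ih x y, ← pow_mul, ← pow_succ]

lemma aux_pow_pow {γ : F} {a : ℕ} (h : γ ^ a = γ) : ∀ j : ℕ, γ ^ a ^ j = γ := by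
  intro j
  induction j with
  | zero => simp
  | succ j ih => rw [pow_succ, pow_mul, ih, h]

/-- An element algebraic over `ZMod p` satisfies `γ ^ (p ^ k) = γ` for some `k > 0`. -/
lemma aux_exists_pow_fixed [Algebra (ZMod p) F] (γ : F) (h : IsAlgebraic (ZMod p) γ) :
    ∃ k : ℕ, 0 < k ∧ γ ^ p ^ k = γ := by
  have hint : IsIntegral (ZMod p) γ := h.isIntegral
  haveI : Module.Finite (ZMod p) (Algebra.adjoin (ZMod p) {γ}) :=
    Module.Finite.iff_fg.mpr hint.fg_adjoin_singleton
  haveI : Finite (Algebra.adjoin (ZMod p) {γ}) := Module.finite_of_finite (ZMod p)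
  have hγ : γ ∈ Algebra.adjoin (ZMod p) {γ} := Algebra.self_mem_adjoin_singleton _ _
  obtain ⟨a, b, hab, heq⟩ := Finite.exists_ne_map_eq_of_infinite
    (fun n : ℕ => (⟨γ ^ p ^ n, pow_mem hγ _⟩ : Algebra.adjoin (ZMod p) {γ}))
  have heq' : γ ^ p ^ a = γ ^ p ^ b := congrArg Subtype.val heq
  clear heq
  wlog hab' : a < b generalizing a b
  · exact this b a hab.symm heq'.symm (by omega)
  refine ⟨b - a, by omega, ?_⟩
  have hinj : Function.Injective (fun z : F => z ^ p ^ a) := by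
    have : (fun z : F => z ^ p ^ a) = (frobenius F p)^[a] := by
      funext z
      rw [iterate_frobenius]
    rw [this]
    exact Function.Injective.iterate (frobenius_inj F p) a
  apply hinj
  show (γ ^ p ^ (b - a)) ^ p ^ a = γ ^ p ^ a
  rw [← pow_mul, ← pow_add, Nat.sub_add_cancel (le_of_lt hab')]
  exact heq'.symm

end Aux

/-- In a field `F` of characteristic `p`, if `d = p^ℓ` with `ℓ ≥ 1` and
`α - β` is algebraic over `𝔽_p`, then for every `λ ∈ F`, `α` is preperiodic under
`f_λ(x) = x^d + λ` iff `β` is preperiodic under `f_λ`. -/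
theorem preperiodic_iff_of_diff_algebraic_pow_char
    (p : ℕ) [Fact p.Prime] (F : Type*) [Field F] [CharP F p] [Algebra (ZMod p) F]
    (ℓ : ℕ) (hℓ : 0 < ℓ) (d : ℕ) (hd : d = p ^ ℓ)
    (α β : F) (hdiff : IsAlgebraic (ZMod p) (α - β)) :
    ∀ lam : F,
      ((∃ m n : ℕ, m < n ∧
          (fun x : F => x ^ d + lam)^[m] α = (fun x : F => x ^ d + lam)^[n] α)
        ↔ (∃ m n : ℕ, m < n ∧
          (fun x : F => x ^ d + lam)^[m] β = (fun x : F => x ^ d + lam)^[n] β)) := by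
  have key : ∀ (x y : F), IsAlgebraic (ZMod p) (x - y) → ∀ lam : F,
      (∃ m n : ℕ, m < n ∧
          (fun z : F => z ^ d + lam)^[m] x = (fun z : F => z ^ d + lam)^[n] x) →
      (∃ m n : ℕ, m < n ∧
          (fun z : F => z ^ d + lam)^[m] y = (fun z : F => z ^ d + lam)^[n] y) := by
    intro x y hxy lam ⟨m, n, hmn, heq⟩
    set f : F → F := fun z : F => z ^ d + lam with hf
    obtain ⟨k, hk, hγ⟩ := aux_exists_pow_fixed (x - y) hxy
    have hγd : (x - y) ^ d ^ k = x - y := by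
      rw [hd, ← pow_mul, Nat.mul_comm ℓ k, pow_mul]
      exact aux_pow_pow hγ ℓ
    set t := n - m with ht
    have htpos : 0 < t := by omega
    have hper : Function.IsPeriodicPt f t (f^[m] x) := by
      show f^[t] (f^[m] x) = f^[m] x
      rw [← Function.iterate_add_apply, ht, Nat.sub_add_cancel (le_of_lt hmn)]
      exact heq.symm
    set T := t * k with hT
    have hTpos : 0 < T := Nat.mul_pos htpos hk
    have hperT : f^[T] (f^[m] x) = f^[m] x := hper.mul_const k
    refine ⟨m, m + T, by omega, ?_⟩
    have e1 : f^[m] x - f^[m] y = (x - y) ^ d ^ m := aux_iter_sub ℓ d hd lam m x y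
    have e2 : f^[m + T] x - f^[m + T] y = (x - y) ^ d ^ (m + T) :=
      aux_iter_sub ℓ d hd lam (m + T) x y
    have e3 : f^[m + T] x = f^[m] x := by
      rw [add_comm, Function.iterate_add_apply]
      exact hperT
    have e4 : (x - y) ^ d ^ (m + T) = (x - y) ^ d ^ m := by
      have hdt : (x - y) ^ d ^ T = x - y := by
        rw [hT, Nat.mul_comm t k, pow_mul]
        exact aux_pow_pow hγd t
      calc (x - y) ^ d ^ (m + T) = ((x - y) ^ d ^ T) ^ d ^ m := by
            rw [← pow_mul, ← pow_add, add_comm]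
        _ = (x - y) ^ d ^ m := by rw [hdt]
    rw [e3, e4] at e2
    linear_combination e2 - e1
  intro lam
  constructor
  · exact key α β hdiff lam
  · exact key β α (by simpa using (hdiff.isIntegral.neg).isAlgebraic) lam
end

section
/- Let K be a field equipped with a nonarchimedean absolute value |·|_v, let d ≥ 2 be an integer, and let γ, λ ∈ K. If |λ|_v > max(1, |γ|_v^d), then the sequence n ↦ log⁺|f_λ^n(γ)|_v / d^n converges to (log|λ|_v)/d, which is strictly positive. -/
open Filter Function

namespace IsNonarchimedean

variable {R : Type*} [Ring R] [Nontrivial R] {v : AbsoluteValue R ℝ}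

/-- Once `|λ|` beats `|γ|^d`, it dominates the first step; afterwards `|x|^d` dominates `|λ|`, so
each further step raises the absolute value to the `d`-th power. -/
theorem abv_iterate_pow_add_succ (hv : IsNonarchimedean v) {d : ℕ} (hd : 2 ≤ d) {γ lam : R}
    (hlam : 1 < v lam) (hγ : v γ ^ d < v lam) (n : ℕ) :
    v ((fun x : R => x ^ d + lam)^[n + 1] γ) = v lam ^ d ^ n := by
  induction n with
  | zero =>
    rw [iterate_one, pow_zero, pow_one]
    exact hv.add_eq_right_of_lt (by rwa [v.map_pow])
  | succ n ih =>
    have hpow : v (((fun x : R => x ^ d + lam)^[n + 1] γ) ^ d) = v lam ^ d ^ (n + 1) := by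
      rw [v.map_pow, ih, ← pow_mul, pow_succ]
    have hdom : v lam < v lam ^ d ^ (n + 1) :=
      lt_self_pow₀ hlam (Nat.one_lt_pow n.succ_ne_zero (by omega))
    rw [iterate_succ_apply', ← hpow]
    exact hv.add_eq_left_of_lt (hpow ▸ hdom)

end IsNonarchimedean

/-- If `|λ|_v > max(1, |γ|_v^d)` for a nonarchimedean absolute value, then
`log⁺|f_λ^n(γ)|_v / d^n → (log|λ|_v)/d > 0`. -/
theorem local_height_of_large_parameter
    (K : Type*) [Field K] (v : AbsoluteValue K ℝ) (hv : IsNonarchimedean v)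
    (d : ℕ) (hd : 2 ≤ d) (γ lam : K)
    (hbig : v lam > max 1 (v γ ^ d)) :
    Tendsto (fun n : ℕ =>
        Real.log (max (v ((fun x : K => x ^ d + lam)^[n] γ)) 1) / (d : ℝ) ^ n)
      atTop (nhds (Real.log (v lam) / d)) ∧
    0 < Real.log (v lam) / d := by
  obtain ⟨hlam, hγ⟩ := max_lt_iff.mp hbig
  have hd₀ : (0 : ℝ) < d := by positivity
  refine ⟨?_, div_pos (Real.log_pos hlam) hd₀⟩
  rw [← tendsto_add_atTop_iff_nat 1]
  refine tendsto_const_nhds.congr fun n => ?_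
  rw [hv.abv_iterate_pow_add_succ hd hlam hγ, max_eq_left (one_le_pow₀ hlam.le), Real.log_pow,
    pow_succ]
  push_cast
  field_simp
end

section
/- Let K be a field equipped with a nonarchimedean absolute value |·|_v, let d ≥ 2 be an integer, and let α, β ∈ K with |α|_v = |β|_v > 1 and |β^d − α^d|_v > |α|_v. Set λ₀ = −α^d. Then the sequence n ↦ log⁺|f_{λ₀}^n(α)|_v / d^n converges to (log|α|_v)/d, the sequence n ↦ log⁺|f_{λ₀}^n(β)|_v / d^n converges to (log|β^d − α^d|_v)/d, and these two limits are distinct. -/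
/-!
Outside the disc `|x|_v ≤ |α|_v` the term `x ^ d` dominates the constant `-α ^ d`, so the
ultrametric inequality gives `|f(x)|_v = |x|_v ^ d` exactly, and an orbit that leaves the
disc has `|f^[n] x|_v = |x|_v ^ (d ^ n)` from then on: the normalised logarithms are
eventually constant. The orbit of `α` is `α ↦ 0 ↦ -α ^ d`, which escapes with absolute value
`|α|_v ^ d`; the orbit of `β` escapes at once with `|f(β)|_v = |β ^ d - α ^ d|_v > |α|_v`.
-/

open Filter Topology

namespace IsNonarchimedean

variable {K : Type*} [Ring K] [Nontrivial K] {v : AbsoluteValue K ℝ}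

theorem apply_pow_add_eq (hv : IsNonarchimedean v) {x c : K} {d : ℕ} (h : v c < v x ^ d) :
    v (x ^ d + c) = v x ^ d := by
  rw [← map_pow] at h ⊢
  exact hv.add_eq_left_of_lt h

theorem apply_iterate_pow_add_eq (hv : IsNonarchimedean v) {x c : K} {d : ℕ} (hx : 1 ≤ v x)
    (hc : v c < v x ^ d) (n : ℕ) :
    v ((fun y => y ^ d + c)^[n] x) = v x ^ d ^ n := by
  induction n with
  | zero => simp
  | succ n ih =>
    have hcn : v c < v ((fun y => y ^ d + c)^[n] x) ^ d := by
      rw [ih, ← pow_mul, ← pow_succ]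
      exact hc.trans_le (pow_le_pow_right₀ hx (Nat.le_self_pow n.succ_ne_zero d))
    rw [Function.iterate_succ_apply', hv.apply_pow_add_eq hcn, ih, ← pow_mul, ← pow_succ]

end IsNonarchimedean

theorem tendsto_log_max_one_div_pow_of_eq_pow_pow {a : ℕ → ℝ} {r : ℝ} {d k : ℕ}
    (hd : d ≠ 0) (hr : 1 ≤ r) (ha : ∀ n, a (n + k) = r ^ d ^ n) :
    Tendsto (fun n => Real.log (max (a n) 1) / (d : ℝ) ^ n) atTop
      (𝓝 (Real.log r / (d : ℝ) ^ k)) := by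
  rw [← tendsto_add_atTop_iff_nat k]
  refine tendsto_const_nhds.congr fun n => ?_
  rw [ha, max_eq_left (one_le_pow₀ hr), Real.log_pow, pow_add]
  push_cast
  field_simp

theorem local_heights_differ_of_large_difference_general
    (K : Type*) [Field K] (v : AbsoluteValue K ℝ) (hv : IsNonarchimedean v)
    (d : ℕ) (hd : 2 ≤ d) (α β : K)
    (hbig : 1 < v α)
    (hdiff : v (β ^ d - α ^ d) > v α) :
    Tendsto (fun n : ℕ =>
        Real.log (max (v ((fun x : K => x ^ d + (-α ^ d))^[n] α)) 1) / (d : ℝ) ^ n)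
      atTop (nhds (Real.log (v α) / d)) ∧
    Tendsto (fun n : ℕ =>
        Real.log (max (v ((fun x : K => x ^ d + (-α ^ d))^[n] β)) 1) / (d : ℝ) ^ n)
      atTop (nhds (Real.log (v (β ^ d - α ^ d)) / d)) ∧
    Real.log (v α) / d ≠ Real.log (v (β ^ d - α ^ d)) / d := by
  set f : K → K := fun x => x ^ d + -α ^ d
  have hd0 : d ≠ 0 := by omega
  have hc : v (-α ^ d) = v α ^ d := by rw [map_neg_eq_map, map_pow]
  have horbit_α (n : ℕ) : v (f^[n + 2] α) = (v α ^ d) ^ d ^ n := by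
    have hα2 : f^[2] α = -α ^ d := by simp [f, zero_pow hd0]
    rw [Function.iterate_add_apply, hα2, ← hc]
    exact hv.apply_iterate_pow_add_eq (hc ▸ one_le_pow₀ hbig.le)
      (hc ▸ lt_self_pow₀ (one_lt_pow₀ hbig hd0) (by omega)) n
  have horbit_β (n : ℕ) : v (f^[n + 1] β) = v (β ^ d - α ^ d) ^ d ^ n := by
    have hβ1 : f^[1] β = β ^ d - α ^ d := by simp [f, sub_eq_add_neg]
    rw [Function.iterate_add_apply, hβ1]
    exact hv.apply_iterate_pow_add_eq (by linarith)
      (hc ▸ pow_lt_pow_left₀ hdiff (v.nonneg α) hd0) n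
  refine ⟨?_, ?_, ?_⟩
  · convert tendsto_log_max_one_div_pow_of_eq_pow_pow (a := fun n => v (f^[n] α)) hd0
      (one_le_pow₀ hbig.le) horbit_α using 2
    rw [Real.log_pow]
    field_simp
  · simpa using tendsto_log_max_one_div_pow_of_eq_pow_pow (a := fun n => v (f^[n] β)) hd0
      (hbig.trans hdiff).le horbit_β
  · exact (div_lt_div_of_pos_right (Real.log_lt_log (by linarith) hdiff) (by positivity)).ne

/-- Suppose `|α|_v = |β|_v > 1` and `|β^d - α^d|_v > |α|_v` for a nonarchimedean
absolute value. With `λ₀ = -α^d`, the local canonical height of `α` at `v` equals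
`(log|α|_v)/d`, that of `β` equals `(log|β^d - α^d|_v)/d`, and these two values differ. -/
theorem local_heights_differ_of_large_difference
    (K : Type*) [Field K] (v : AbsoluteValue K ℝ) (hv : IsNonarchimedean v)
    (d : ℕ) (hd : 2 ≤ d) (α β : K)
    (heq : v α = v β) (hbig : 1 < v α)
    (hdiff : v (β ^ d - α ^ d) > v α) :
    Tendsto (fun n : ℕ =>
        Real.log (max (v ((fun x : K => x ^ d + (-α ^ d))^[n] α)) 1) / (d : ℝ) ^ n)
      atTop (nhds (Real.log (v α) / d)) ∧
    Tendsto (fun n : ℕ =>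
        Real.log (max (v ((fun x : K => x ^ d + (-α ^ d))^[n] β)) 1) / (d : ℝ) ^ n)
      atTop (nhds (Real.log (v (β ^ d - α ^ d)) / d)) ∧
    Real.log (v α) / d ≠ Real.log (v (β ^ d - α ^ d)) / d :=
  local_heights_differ_of_large_difference_general K v hv d hd α β hbig hdiff
end

section
/- Let K be a field equipped with a nonarchimedean absolute value |·|_v, let d ≥ 2 be an integer, and let α, β ∈ K with |α|_v = |β|_v > 1 and |β^d − α^d|_v = |α|_v. Suppose γ₀, γ₁ ∈ K satisfy: |β^d − α^d − γ₀·α|_v < |α|_v; (γ₀ + γ₁)^d = 1; γ₁^d ≠ 1; |γ₁|_v ≤ 1; and |γ₁^d − 1|_v = 1. Set λ₁ = γ₁·α − α^d. Then the sequence n ↦ log⁺|f_{λ₁}^n(α)|_v / d^n converges to (log|α|_v)/d, while every limit c of the sequence n ↦ log⁺|f_{λ₁}^n(β)|_v / d^n satisfies c < (log|α|_v)/d; in particular the β-sequence does not converge to (log|α|_v)/d. -/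
open Filter Topology

/-!
Put `R = |α|_v` and `f = f_{λ₁}`, so that `|λ₁|_v = R^d`. Outside the closed disc of radius `R`
the term `x^d` dominates `λ₁`, hence `|f^k(y)|_v = |y|_v^(d^k)` once `|y|_v > R`, and the height
sequence of `y` is eventually constant, equal to `log |y|_v / d^n` at the escape time `n`.

For `α`: `f²(α) = (γ₁^d - 1) α^d + γ₁ α` has absolute value `R^d`, so its height is
`log (R^d) / d² = log R / d`.

For `β`: `f(β) = (γ₀ + γ₁) α + ε` with `|ε|_v < R` and `((γ₀ + γ₁) α)^d = α^d`, so
`f²(β) = (f(β)^d - ((γ₀ + γ₁) α)^d) + γ₁ α` has absolute value `< R^d`. Inductively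
`|f^(m+1)(β)|_v < R^(d^m)` for all `m ≥ 1`. Either the orbit stays in the disc of radius `R`
(height `0`), or it escapes at some time `m + 1 ≥ 2`, and then the height is
`log |f^(m+1)(β)|_v / d^(m+1) < log R / d`.
-/

lemma AbsoluteValue.map_eq_one_of_pow_eq_one {A : Type*} [Semiring A] [Nontrivial A]
    (v : AbsoluteValue A ℝ) {z : A} {n : ℕ} (h : z ^ n = 1) (hn : n ≠ 0) : v z = 1 :=
  (pow_eq_one_iff_of_nonneg (v.nonneg z) hn).mp (by rw [← map_pow, h, map_one])

namespace IsNonarchimedean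

variable {A : Type*} [CommRing A] [Nontrivial A] {v : AbsoluteValue A ℝ}

lemma abv_pow_succ_sub_pow_succ_le (hv : IsNonarchimedean v) {a b : A} {R : ℝ}
    (ha : v a ≤ R) (hb : v b ≤ R) (n : ℕ) :
    v (a ^ (n + 1) - b ^ (n + 1)) ≤ v (a - b) * R ^ n := by
  induction n with
  | zero => simp
  | succ n ih =>
    have hR : 0 ≤ R := (v.nonneg a).trans ha
    have hsplit : a ^ (n + 2) - b ^ (n + 2)
        = a * (a ^ (n + 1) - b ^ (n + 1)) + (a - b) * b ^ (n + 1) := by ring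
    rw [hsplit]
    refine (hv _ _).trans (max_le ?_ ?_)
    · calc v (a * (a ^ (n + 1) - b ^ (n + 1)))
          ≤ R * (v (a - b) * R ^ n) := by
            rw [map_mul]; exact mul_le_mul ha ih (v.nonneg _) hR
        _ = v (a - b) * R ^ (n + 1) := by ring
    · rw [map_mul, map_pow]
      gcongr

end IsNonarchimedean

section LocalHeight

variable {A : Type*} [Semiring A] (v : AbsoluteValue A ℝ) (d : ℕ)

noncomputable def localHeightSeq (f : A → A) (x : A) (n : ℕ) : ℝ :=
  Real.log (max (v (f^[n] x)) 1) / (d : ℝ) ^ n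

variable {v d} {f : A → A} {x : A}

lemma tendsto_localHeightSeq_of_abv_iterate_eq_pow (hd : d ≠ 0) {V : ℝ} (hV : 1 ≤ V) {n : ℕ}
    (h : ∀ k, v (f^[k + n] x) = V ^ d ^ k) :
    Tendsto (localHeightSeq v d f x) atTop (𝓝 (Real.log V / d ^ n)) := by
  refine tendsto_const_nhds.congr' ?_
  filter_upwards [eventually_ge_atTop n] with m hm
  obtain ⟨k, rfl⟩ := Nat.exists_eq_add_of_le' hm
  have hdk : ((d : ℝ) ^ k) ≠ 0 := by positivity
  rw [localHeightSeq, h, max_eq_left (one_le_pow₀ hV), Real.log_pow, pow_add]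
  push_cast
  rw [mul_div_mul_left _ _ hdk]

lemma tendsto_localHeightSeq_zero_of_abv_iterate_le (hd : 1 < d) {B : ℝ}
    (h : ∀ n, v (f^[n] x) ≤ B) :
    Tendsto (localHeightSeq v d f x) atTop (𝓝 0) := by
  have hdR : (1 : ℝ) < d := by exact_mod_cast hd
  refine squeeze_zero (g := fun n => Real.log (max B 1) / (d : ℝ) ^ n) (fun n => ?_) (fun n => ?_)
    (tendsto_const_nhds.div_atTop (tendsto_pow_atTop_atTop_of_one_lt hdR))
  · exact div_nonneg (Real.log_nonneg (le_max_right _ _)) (by positivity)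
  · unfold localHeightSeq
    gcongr
    exact h n

end LocalHeight

section Unicritical

variable {A : Type*} [CommRing A] [Nontrivial A] {v : AbsoluteValue A ℝ} (hv : IsNonarchimedean v)
  {d : ℕ} {c : A} {R : ℝ}
include hv

lemma abv_pow_add_eq (hd : d ≠ 0) (hR : 0 ≤ R) (hc : v c ≤ R ^ d) {y : A} (hy : R < v y) :
    v (y ^ d + c) = v y ^ d := by
  have hlt : v c < v (y ^ d) := by
    rw [map_pow]; exact hc.trans_lt (pow_lt_pow_left₀ hy hR hd)
  rw [hv.add_eq_left_of_lt hlt, map_pow]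

lemma abv_iterate_pow_add_eq (hd : d ≠ 0) (hR : 1 ≤ R) (hc : v c ≤ R ^ d) {y : A}
    (hy : R < v y) (k : ℕ) : v ((fun x => x ^ d + c)^[k] y) = v y ^ d ^ k := by
  induction k with
  | zero => simp
  | succ k ih =>
    have hk : R < v ((fun x => x ^ d + c)^[k] y) := by
      rw [ih]
      exact hy.trans_le (le_self_pow₀ (hR.trans hy.le) (pow_ne_zero _ hd))
    rw [Function.iterate_succ_apply', abv_pow_add_eq hv hd (zero_le_one.trans hR) hc hk, ih,
      ← pow_mul, pow_succ]

lemma tendsto_localHeightSeq_of_escape (hd : d ≠ 0) (hR : 1 ≤ R) (hc : v c ≤ R ^ d) {x : A}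
    {n : ℕ} (hx : R < v ((fun x => x ^ d + c)^[n] x)) :
    Tendsto (localHeightSeq v d (fun x => x ^ d + c) x) atTop
      (𝓝 (Real.log (v ((fun x => x ^ d + c)^[n] x)) / d ^ n)) :=
  tendsto_localHeightSeq_of_abv_iterate_eq_pow hd (hR.trans hx.le) fun k => by
    rw [Function.iterate_add_apply]
    exact abv_iterate_pow_add_eq hv hd hR hc hx k

lemma abv_iterate_succ_lt_pow_pow (hd : 1 < d) (hR : 1 < R) (hc : v c ≤ R ^ d) {x : A}
    (h2 : v ((fun x => x ^ d + c)^[2] x) < R ^ d) :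
    ∀ m, 1 ≤ m → v ((fun x => x ^ d + c)^[m + 1] x) < R ^ d ^ m := by
  refine Nat.le_induction (by simpa using h2) fun m hm ih => ?_
  rw [Function.iterate_succ_apply']
  refine (hv _ _).trans_lt (max_lt ?_ ?_)
  · rw [map_pow, pow_succ, pow_mul]
    exact pow_lt_pow_left₀ ih (v.nonneg _) (by omega)
  · calc v c ≤ R ^ d ^ 1 := by rwa [pow_one]
      _ < R ^ d ^ (m + 1) := pow_lt_pow_right₀ hR (Nat.pow_lt_pow_right hd (by omega))

lemma lt_of_tendsto_localHeightSeq (hd : 1 < d) (hR : 1 < R) (hc : v c ≤ R ^ d) {x : A}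
    (h0 : v x ≤ R) (h1 : v (x ^ d + c) ≤ R) (h2 : v ((fun x => x ^ d + c)^[2] x) < R ^ d)
    {L : ℝ} (hL : Tendsto (localHeightSeq v d (fun x => x ^ d + c) x) atTop (𝓝 L)) :
    L < Real.log R / d := by
  by_cases hbdd : ∀ n, v ((fun x => x ^ d + c)^[n] x) ≤ R
  · rw [tendsto_nhds_unique hL (tendsto_localHeightSeq_zero_of_abv_iterate_le (by omega) hbdd)]
    exact div_pos (Real.log_pos hR) (by positivity)
  push Not at hbdd
  obtain ⟨n, hn⟩ := hbdd
  obtain ⟨m, hm, rfl⟩ : ∃ m, 1 ≤ m ∧ n = m + 1 := by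
    match n with
    | 0 => exact absurd h0 hn.not_ge
    | 1 => exact absurd h1 hn.not_ge
    | m + 2 => exact ⟨m + 1, by omega, rfl⟩
  have hV := abv_iterate_succ_lt_pow_pow hv hd hR hc h2 m hm
  rw [tendsto_nhds_unique hL (tendsto_localHeightSeq_of_escape hv (by omega) hR.le hc hn)]
  calc Real.log (v ((fun x => x ^ d + c)^[m + 1] x)) / (d : ℝ) ^ (m + 1)
      < Real.log (R ^ d ^ m) / (d : ℝ) ^ (m + 1) := by
        gcongr
        exact (zero_lt_one.trans hR).trans hn
    _ = Real.log R / d := by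
        have hd0 : (d : ℝ) ≠ 0 := by positivity
        rw [Real.log_pow, pow_succ]
        push_cast
        field_simp

end Unicritical

section Orbits

variable {A : Type*} [CommRing A] {v : AbsoluteValue A ℝ} {d : ℕ} {α β γ γ₀ : A}

lemma abv_mul_lt_pow (hd : 1 < d) (hα : 1 < v α) (hγ : v γ ≤ 1) : v (γ * α) < v α ^ d :=
  calc v (γ * α) ≤ v α := by
        rw [map_mul]; exact mul_le_of_le_one_left (v.nonneg α) hγ
    _ < v α ^ d := lt_self_pow₀ hα (by omega)

variable [Nontrivial A] (hv : IsNonarchimedean v)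
include hv

lemma abv_mul_sub_pow (hd : 1 < d) (hα : 1 < v α) (hγ : v γ ≤ 1) :
    v (γ * α - α ^ d) = v α ^ d := by
  have hlt : v (γ * α) < v (-α ^ d) := by
    rw [map_neg_eq_map, map_pow]; exact abv_mul_lt_pow hd hα hγ
  rw [sub_eq_add_neg, hv.add_eq_right_of_lt hlt, map_neg_eq_map, map_pow]

lemma abv_iterate_two_eq (hd : 1 < d) (hα : 1 < v α) (hγ : v γ ≤ 1)
    (hγ' : v (γ ^ d - 1) = 1) :
    v ((fun x => x ^ d + (γ * α - α ^ d))^[2] α) = v α ^ d := by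
  have hexpand : (fun x => x ^ d + (γ * α - α ^ d))^[2] α
      = (γ ^ d - 1) * α ^ d + γ * α := by
    simp only [Function.iterate_succ, Function.iterate_zero, Function.comp_apply, id_eq]
    ring
  have hlead : v ((γ ^ d - 1) * α ^ d) = v α ^ d := by rw [map_mul, map_pow, hγ', one_mul]
  rw [hexpand, hv.add_eq_left_of_lt (hlead ▸ abv_mul_lt_pow hd hα hγ), hlead]

lemma abv_pow_add_mul_sub_pow_eq (hd : d ≠ 0) (hroot : (γ₀ + γ) ^ d = 1)
    (hε : v (β ^ d - α ^ d - γ₀ * α) < v α) :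
    v (β ^ d + (γ * α - α ^ d)) = v α := by
  have hvu : v ((γ₀ + γ) * α) = v α := by
    rw [map_mul, v.map_eq_one_of_pow_eq_one hroot hd, one_mul]
  have hexpand : β ^ d + (γ * α - α ^ d) = (γ₀ + γ) * α + (β ^ d - α ^ d - γ₀ * α) := by ring
  rw [hexpand, hv.add_eq_left_of_lt (hvu ▸ hε), hvu]

lemma abv_iterate_two_lt (hd : 1 < d) (hα : 1 < v α) (hγ : v γ ≤ 1)
    (hroot : (γ₀ + γ) ^ d = 1) (hε : v (β ^ d - α ^ d - γ₀ * α) < v α) :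
    v ((fun x => x ^ d + (γ * α - α ^ d))^[2] β) < v α ^ d := by
  set y := β ^ d + (γ * α - α ^ d) with hy
  set u := (γ₀ + γ) * α
  have hvy : v y = v α := abv_pow_add_mul_sub_pow_eq hv (by omega) hroot hε
  have hvu : v u = v α := by
    rw [map_mul, v.map_eq_one_of_pow_eq_one hroot (by omega), one_mul]
  have hexpand : (fun x => x ^ d + (γ * α - α ^ d))^[2] β = (y ^ d - u ^ d) + γ * α := by
    simp only [Function.iterate_succ, Function.iterate_zero, Function.comp_apply, id_eq, ← hy]
    rw [mul_pow, hroot]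
    ring
  have hdiff : v (y ^ d - u ^ d) < v α ^ d := by
    have hpow := hv.abv_pow_succ_sub_pow_succ_le hvy.le hvu.le (d - 1)
    rw [Nat.sub_add_cancel (by omega)] at hpow
    have hyu : y - u = β ^ d - α ^ d - γ₀ * α := by ring
    calc v (y ^ d - u ^ d) ≤ v (y - u) * v α ^ (d - 1) := hpow
      _ < v α * v α ^ (d - 1) := by
          rw [hyu]; exact mul_lt_mul_of_pos_right hε (pow_pos (zero_lt_one.trans hα) _)
      _ = v α ^ d := by rw [← pow_succ', Nat.sub_add_cancel (by omega)]
  rw [hexpand]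
  exact (hv _ _).trans_lt (max_lt hdiff (abv_mul_lt_pow hd hα hγ))

end Orbits

theorem local_heights_differ_of_equal_difference_general
    (K : Type*) [Field K] (v : AbsoluteValue K ℝ) (hv : IsNonarchimedean v)
    (d : ℕ) (hd : 2 ≤ d) (α β γ₀ γ₁ : K)
    (heq : v α = v β) (hbig : 1 < v α)
    (hγ₀ : v (β ^ d - α ^ d - γ₀ * α) < v α)
    (hroot : (γ₀ + γ₁) ^ d = 1)
    (hγ₁int : v γ₁ ≤ 1) (hγ₁unit : v (γ₁ ^ d - 1) = 1) :
    Tendsto (fun n : ℕ =>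
        Real.log (max (v ((fun x : K => x ^ d + (γ₁ * α - α ^ d))^[n] α)) 1) / (d : ℝ) ^ n)
      atTop (nhds (Real.log (v α) / d)) ∧
    (∀ c : ℝ,
      Tendsto (fun n : ℕ =>
          Real.log (max (v ((fun x : K => x ^ d + (γ₁ * α - α ^ d))^[n] β)) 1) / (d : ℝ) ^ n)
        atTop (nhds c) → c < Real.log (v α) / d) ∧
    ¬ Tendsto (fun n : ℕ =>
        Real.log (max (v ((fun x : K => x ^ d + (γ₁ * α - α ^ d))^[n] β)) 1) / (d : ℝ) ^ n)
      atTop (nhds (Real.log (v α) / d)) := by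
  have hc : v (γ₁ * α - α ^ d) ≤ v α ^ d := (abv_mul_sub_pow hv hd hbig hγ₁int).le
  have hα2 := abv_iterate_two_eq hv hd hbig hγ₁int hγ₁unit
  have hαlim : Tendsto (localHeightSeq v d (fun x => x ^ d + (γ₁ * α - α ^ d)) α) atTop
      (𝓝 (Real.log (v α) / d)) := by
    have h := tendsto_localHeightSeq_of_escape hv (by omega) hbig.le hc
      (hα2 ▸ lt_self_pow₀ hbig (by omega))
    have hd0 : (d : ℝ) ≠ 0 := by positivity
    rwa [hα2, Real.log_pow, pow_two, mul_div_mul_left _ _ hd0] at h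
  have hβlim : ∀ c : ℝ,
      Tendsto (localHeightSeq v d (fun x => x ^ d + (γ₁ * α - α ^ d)) β) atTop (𝓝 c) →
        c < Real.log (v α) / d := fun c =>
    lt_of_tendsto_localHeightSeq hv hd hbig hc heq.ge
      (abv_pow_add_mul_sub_pow_eq hv (by omega) hroot hγ₀).le
      (abv_iterate_two_lt hv hd hbig hγ₁int hroot hγ₀)
  exact ⟨hαlim, hβlim, fun h => (hβlim _ h).false⟩

/-- Suppose `|α|_v = |β|_v > 1`, `|β^d - α^d|_v = |α|_v`, and `γ₀, γ₁` satisfy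
`|β^d - α^d - γ₀·α|_v < |α|_v`, `(γ₀ + γ₁)^d = 1`, `γ₁^d ≠ 1`, `|γ₁|_v ≤ 1`, `|γ₁^d - 1|_v = 1`.
With `λ₁ = γ₁·α - α^d`, the local height sequence of `α` converges to `(log|α|_v)/d`, while any
limit of the local height sequence of `β` is strictly smaller; in particular the `β`-sequence
does not converge to `(log|α|_v)/d`. -/
theorem local_heights_differ_of_equal_difference
    (K : Type*) [Field K] (v : AbsoluteValue K ℝ) (hv : IsNonarchimedean v)
    (d : ℕ) (hd : 2 ≤ d) (α β γ₀ γ₁ : K)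
    (heq : v α = v β) (hbig : 1 < v α)
    (hdiff : v (β ^ d - α ^ d) = v α)
    (hγ₀ : v (β ^ d - α ^ d - γ₀ * α) < v α)
    (hroot : (γ₀ + γ₁) ^ d = 1) (hnotroot : γ₁ ^ d ≠ 1)
    (hγ₁int : v γ₁ ≤ 1) (hγ₁unit : v (γ₁ ^ d - 1) = 1) :
    Tendsto (fun n : ℕ =>
        Real.log (max (v ((fun x : K => x ^ d + (γ₁ * α - α ^ d))^[n] α)) 1) / (d : ℝ) ^ n)
      atTop (nhds (Real.log (v α) / d)) ∧
    (∀ c : ℝ,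
      Tendsto (fun n : ℕ =>
          Real.log (max (v ((fun x : K => x ^ d + (γ₁ * α - α ^ d))^[n] β)) 1) / (d : ℝ) ^ n)
        atTop (nhds c) → c < Real.log (v α) / d) ∧
    ¬ Tendsto (fun n : ℕ =>
        Real.log (max (v ((fun x : K => x ^ d + (γ₁ * α - α ^ d))^[n] β)) 1) / (d : ℝ) ^ n)
      atTop (nhds (Real.log (v α) / d)) :=
  local_heights_differ_of_equal_difference_general K v hv d hd α β γ₀ γ₁ heq hbig hγ₀ hroot hγ₁int
    hγ₁unit
end

section
/- Let p be a prime and let K be a field of characteristic p equipped with a nonarchimedean absolute value |·|_v. Let d = s·p^ℓ where ℓ ≥ 0, s ≥ 2 and s is coprime to p (so d ≥ 2 is not a power of p). Let α, β ∈ K with |α|_v = |β|_v > 1, set ε = β^d − α^d, and assume |ε|_v < |α|_v, |ε|_v ≥ 1, and moreover |ε|_v > 1 in case d = 2. Set λ₂ = α − α^d. Then f_{λ₂}(α) = α (so α is a fixed point of f_{λ₂}), while |f_{λ₂}^2(β)|_v = |α|_v^{(s−1)p^ℓ}·|ε|_v^{p^ℓ} > |α|_v and |f_{λ₂}^n(β)|_v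 → ∞ as n → ∞. -/
/-!
`α` is fixed by the choice of `λ₂`, and `f(β) = α + ε`. In characteristic `p` the Frobenius gives
`(α + ε)^d - α^d = ((α + ε)^s - α^s)^(p^ℓ)`; as `s` is a unit of the prime field, `|s|_v = 1`, so the
linear term `s α^(s-1) ε` of the binomial expansion dominates, which yields `|f²(β)|_v`. Once a point
satisfies `|x|_v > |α|_v`, the term `x^d` dominates `λ₂` (of size `|α|_v^d`), so `|f(x)|_v = |x|_v^d`
and the orbit escapes.
-/

open Filter

lemma apply_iterate_eq_pow_pow {X : Type*} (φ : X → ℝ) (f : X → X) {r : ℝ} (hr : 1 ≤ r)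
    {d : ℕ} (hd : d ≠ 0) (hf : ∀ x, r < φ x → φ (f x) = φ x ^ d) {x : X} (hx : r < φ x) :
    ∀ n, φ (f^[n] x) = φ x ^ d ^ n
  | 0 => by simp
  | n + 1 => by
    have hn := apply_iterate_eq_pow_pow φ f hr hd hf hx n
    have hr_lt : r < φ (f^[n] x) :=
      hn ▸ hx.trans_le (le_self_pow₀ (hr.trans hx.le) (pow_ne_zero n hd))
    rw [Function.iterate_succ_apply', hf _ hr_lt, hn, ← pow_mul, pow_succ]

namespace AbsoluteValue

variable {K : Type*} [Field K] (v : AbsoluteValue K ℝ)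

/-- By Fermat, `(s : K)` is a root of unity. -/
lemma apply_natCast_eq_one_of_coprime (p : ℕ) [hp : Fact p.Prime] [CharP K p] {s : ℕ}
    (hsp : s.Coprime p) : v s = 1 := by
  have hs : (s : ZMod p) ≠ 0 := by
    rw [Ne, ZMod.natCast_eq_zero_iff]
    exact (Nat.Prime.coprime_iff_not_dvd hp.out).mp hsp.symm
  have hroot : (s : K) ^ (p - 1) = 1 := by
    simpa using congrArg (ZMod.castHom dvd_rfl K) (ZMod.pow_card_sub_one_eq_one hs)
  refine (pow_eq_one_iff_of_nonneg (v.nonneg _) (Nat.sub_ne_zero_of_lt hp.out.one_lt)).mp ?_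
  rw [← map_pow, hroot, map_one]

end AbsoluteValue

namespace IsNonarchimedean

variable {K : Type*} [Field K] {v : AbsoluteValue K ℝ}

lemma apply_pow_add_of_lt (hv : IsNonarchimedean v) {c x : K} {d : ℕ} (h : v c < v x ^ d) :
    v (x ^ d + c) = v x ^ d := by
  rw [hv.add_eq_left_of_lt (by rwa [map_pow]), map_pow]

lemma apply_sub_pow_of_one_lt (hv : IsNonarchimedean v) {a : K} (ha : 1 < v a) {d : ℕ}
    (hd : 1 < d) : v (a - a ^ d) = v a ^ d := by
  have hdom : v a < v (-a ^ d) := by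
    rw [map_neg_eq_map, map_pow]
    exact lt_self_pow₀ ha hd
  rw [sub_eq_add_neg, hv.add_eq_right_of_lt hdom, map_neg_eq_map, map_pow]

/-- In the binomial expansion of `(1 + x) ^ s - 1` the linear term `s * x` strictly dominates. -/
lemma apply_one_add_pow_sub_one (hv : IsNonarchimedean v) {x : K} (hx : v x < 1) {s : ℕ}
    (hs : v s = 1) : v ((1 + x) ^ s - 1) = v x := by
  rcases eq_or_ne x 0 with rfl | hx0
  · simp
  have hs0 : s ≠ 0 := by rintro rfl; simp at hs
  have hexp : (1 + x) ^ s - 1 = ∑ k ∈ Finset.range s, x ^ (k + 1) * (s.choose (k + 1) : K) := by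
    rw [add_comm, add_pow, Finset.sum_range_succ']
    simp
  rw [hexp, hv.apply_sum_eq_of_lt (fun a => (map_neg_eq_map v a).symm)
    (Finset.mem_range.mpr (Nat.pos_of_ne_zero hs0))]
  · simp [hs]
  · intro j _ hj
    calc v (x ^ (j + 1) * (s.choose (j + 1) : K))
        ≤ v x ^ (j + 1) := by
          rw [map_mul, map_pow]
          exact mul_le_of_le_one_right (by positivity) hv.apply_natCast_le_one
      _ < v x := pow_lt_self_of_lt_one₀ (v.pos hx0) hx (by omega)
      _ = v (x ^ (0 + 1) * (s.choose (0 + 1) : K)) := by simp [hs]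

lemma apply_add_pow_sub_pow (hv : IsNonarchimedean v) {a e : K} (he : v e < v a) {s : ℕ}
    (hs : v s = 1) : v ((a + e) ^ s - a ^ s) = v a ^ (s - 1) * v e := by
  have ha : a ≠ 0 := v.pos_iff.mp ((v.nonneg e).trans_lt he)
  obtain ⟨t, rfl⟩ : ∃ t, s = t + 1 := Nat.exists_eq_succ_of_ne_zero (by rintro rfl; simp at hs)
  have hfactor : (a + e) ^ (t + 1) - a ^ (t + 1) = a ^ (t + 1) * ((1 + e / a) ^ (t + 1) - 1) := by
    rw [mul_sub, ← mul_pow, mul_add, mul_one, mul_div_cancel₀ _ ha, mul_one]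
  rw [hfactor, map_mul, hv.apply_one_add_pow_sub_one _ hs, map_pow, map_div₀, Nat.add_sub_cancel,
    pow_succ]
  · rw [mul_assoc, mul_div_cancel₀ _ (v.pos ha).ne']
  · rwa [map_div₀, div_lt_one (v.pos ha)]

lemma apply_add_pow_sub_pow_of_charP (hv : IsNonarchimedean v) (p : ℕ) [Fact p.Prime]
    [CharP K p] {s : ℕ} (hsp : s.Coprime p) (ℓ : ℕ) {a e : K} (he : v e < v a) :
    v ((a + e) ^ (s * p ^ ℓ) - a ^ (s * p ^ ℓ)) = v a ^ ((s - 1) * p ^ ℓ) * v e ^ p ^ ℓ := by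
  rw [pow_mul, pow_mul, ← sub_pow_char_pow, map_pow,
    hv.apply_add_pow_sub_pow he (v.apply_natCast_eq_one_of_coprime p hsp), mul_pow, pow_mul]

end IsNonarchimedean

theorem fixed_point_vs_escaping_orbit_general
    (p : ℕ) [Fact p.Prime] (K : Type*) [Field K] [CharP K p]
    (v : AbsoluteValue K ℝ) (hv : IsNonarchimedean v)
    (s ℓ : ℕ) (hs2 : 2 ≤ s) (hsp : Nat.Coprime s p)
    (d : ℕ) (hd : d = s * p ^ ℓ)
    (α β : K) (hbig : 1 < v α)
    (hlt : v (β ^ d - α ^ d) < v α) (hge : 1 ≤ v (β ^ d - α ^ d))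
    (hd2 : d = 2 → 1 < v (β ^ d - α ^ d)) :
    (fun x : K => x ^ d + (α - α ^ d)) α = α ∧
    v ((fun x : K => x ^ d + (α - α ^ d))^[2] β)
      = v α ^ ((s - 1) * p ^ ℓ) * v (β ^ d - α ^ d) ^ p ^ ℓ ∧
    v α < v ((fun x : K => x ^ d + (α - α ^ d))^[2] β) ∧
    Tendsto (fun n : ℕ => v ((fun x : K => x ^ d + (α - α ^ d))^[n] β)) atTop atTop := by
  set f := fun x : K => x ^ d + (α - α ^ d)
  set ε := β ^ d - α ^ d
  have hpℓ_pos : 0 < p ^ ℓ := pow_pos (Fact.out : p.Prime).pos ℓ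
  have hd1 : 1 < d := hd ▸ one_lt_mul_of_lt_of_le hs2 hpℓ_pos
  have hf2 : f^[2] β = ((α + ε) ^ d - α ^ d) + α := by
    simp only [f, ε, Function.iterate_succ_apply', Function.iterate_zero_apply]
    ring
  have hkey : v ((α + ε) ^ d - α ^ d) = v α ^ ((s - 1) * p ^ ℓ) * v ε ^ p ^ ℓ :=
    hd ▸ hv.apply_add_pow_sub_pow_of_charP p hsp ℓ hlt
  have hgrowth : v α < v α ^ ((s - 1) * p ^ ℓ) * v ε ^ p ^ ℓ := by
    rcases Nat.lt_or_ge 1 ((s - 1) * p ^ ℓ) with hm | hm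
    · calc v α < v α ^ ((s - 1) * p ^ ℓ) := lt_self_pow₀ hbig hm
        _ ≤ _ := le_mul_of_one_le_right (by positivity) (one_le_pow₀ hge)
    · obtain ⟨hs1, hpℓ⟩ := mul_eq_one.mp (le_antisymm hm (Nat.mul_pos (by omega) hpℓ_pos))
      rw [hs1, hpℓ, mul_one, pow_one, pow_one]
      exact lt_mul_of_one_lt_right (by positivity) (hd2 (by rw [hd, hpℓ]; omega))
  have hf2_eq : v (f^[2] β) = v α ^ ((s - 1) * p ^ ℓ) * v ε ^ p ^ ℓ := by
    rw [hf2, hv.add_eq_left_of_lt (hkey ▸ hgrowth), hkey]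
  have hf2_gt : v α < v (f^[2] β) := hf2_eq ▸ hgrowth
  have hescape : ∀ x, v α < v x → v (f x) = v x ^ d := fun x hx =>
    hv.apply_pow_add_of_lt <| (hv.apply_sub_pow_of_one_lt hbig hd1).trans_lt <|
      pow_lt_pow_left₀ hx (v.nonneg α) (by omega)
  refine ⟨by simp [f], hf2_eq, hf2_gt, ?_⟩
  rw [← tendsto_add_atTop_iff_nat 2]
  simp only [Function.iterate_add_apply,
    apply_iterate_eq_pow_pow v f hbig.le (by omega) hescape hf2_gt]
  exact (tendsto_pow_atTop_atTop_of_one_lt (hbig.trans hf2_gt)).comp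
    (tendsto_pow_atTop_atTop_of_one_lt hd1)

/-- In characteristic `p`, with `d = s·p^ℓ`, `s ≥ 2` coprime to `p`, and a
nonarchimedean absolute value: if `|α|_v = |β|_v > 1`, `ε = β^d - α^d` satisfies
`1 ≤ |ε|_v < |α|_v` (with `1 < |ε|_v` when `d = 2`), then with `λ₂ = α - α^d`, `α` is a fixed
point of `f_{λ₂}`, while `|f_{λ₂}^2(β)|_v = |α|_v^((s-1)p^ℓ)·|ε|_v^(p^ℓ) > |α|_v` and
`|f_{λ₂}^n(β)|_v → ∞`. -/
theorem fixed_point_vs_escaping_orbit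
    (p : ℕ) [Fact p.Prime] (K : Type*) [Field K] [CharP K p]
    (v : AbsoluteValue K ℝ) (hv : IsNonarchimedean v)
    (s ℓ : ℕ) (hs2 : 2 ≤ s) (hsp : Nat.Coprime s p)
    (d : ℕ) (hd : d = s * p ^ ℓ)
    (α β : K) (heq : v α = v β) (hbig : 1 < v α)
    (hlt : v (β ^ d - α ^ d) < v α) (hge : 1 ≤ v (β ^ d - α ^ d))
    (hd2 : d = 2 → 1 < v (β ^ d - α ^ d)) :
    (fun x : K => x ^ d + (α - α ^ d)) α = α ∧
    v ((fun x : K => x ^ d + (α - α ^ d))^[2] β)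
      = v α ^ ((s - 1) * p ^ ℓ) * v (β ^ d - α ^ d) ^ p ^ ℓ ∧
    v α < v ((fun x : K => x ^ d + (α - α ^ d))^[2] β) ∧
    Tendsto (fun n : ℕ => v ((fun x : K => x ^ d + (α - α ^ d))^[n] β)) atTop atTop :=
  fixed_point_vs_escaping_orbit_general p K v hv s ℓ hs2 hsp d hd α β hbig hlt hge hd2
end

section
/- Let p be a prime, let L be a field of characteristic p with algebraic closure L̄, let γ ∈ L, and let d ≥ 2 be an integer. Then the set of λ ∈ L̄ such that γ (viewed in L̄) is preperiodic under f_λ(x) = x^d + λ is infinite. -/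
/-!
If `p ∣ d`, the polynomial `λ ↦ f_λ^(n+1)(γ) - γ` has derivative `1`, so its `d^n` roots are
distinct parameters. If `γ = 0`, every `λ` in a finite field `𝔽_q` keeps the orbit of `0` inside
`𝔽_q`. Otherwise write `u_n(λ) = f_λ^n(γ)`: then `u_{n+2} - u_{n+1} = u_{n+1}^d - u_n^d` factors as
`g_n · (u_{n+1} - u_n)` with `g_n = ∑ u_{n+1}^i u_n^(d-1-i)`, and at a root of `u_{n+1} - u_n` the
factor `g_n` takes the value `d a^(d-1)` at the fixed point `a`, where `a ≠ 0` because `a = 0` would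
force `λ = 0` and then `γ = 0`. So a root of the nonconstant `g_n` is a parameter whose orbit of `γ`
reaches a fixed point at time `n + 1` but not at time `n`, and these parameters are distinct for
distinct `n`.
-/

open Polynomial Filter Function

namespace Function

variable {α : Type*} {f : α → α} {x : α}

def IsPreperiodicPt (f : α → α) (x : α) : Prop :=
  ∃ m n, m < n ∧ f^[m] x = f^[n] x

theorem isPreperiodicPt_of_isFixedPt_iterate {n : ℕ} (h : IsFixedPt f (f^[n] x)) :
    IsPreperiodicPt f x :=
  ⟨n, n + 1, n.lt_succ_self, by rw [iterate_succ_apply', h.eq]⟩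

theorem isPreperiodicPt_of_mapsTo {s : Set α} (hs : s.Finite) (hf : Set.MapsTo f s s)
    (hx : x ∈ s) : IsPreperiodicPt f x :=
  Set.Finite.exists_lt_map_eq_of_forall_mem (fun n => hf.iterate n hx) hs

theorem IsFixedPt.iterate_of_le {m n : ℕ} (h : IsFixedPt f (f^[m] x)) (hmn : m ≤ n) :
    IsFixedPt f (f^[n] x) := by
  obtain ⟨k, rfl⟩ := Nat.exists_eq_add_of_le hmn
  rwa [add_comm, iterate_add_apply, (h.iterate k).eq]

end Function

namespace Polynomial

section CommRing

variable {R : Type*} [CommRing R] {d : ℕ} {γ : R} {n : ℕ}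

noncomputable def paramOrbit (d : ℕ) (γ : R) (n : ℕ) : R[X] :=
  (fun P => P ^ d + X)^[n] (C γ)

theorem paramOrbit_zero : paramOrbit d γ 0 = C γ := rfl

theorem paramOrbit_succ : paramOrbit d γ (n + 1) = paramOrbit d γ n ^ d + X :=
  iterate_succ_apply' ..

theorem eval_paramOrbit (lam : R) :
    (paramOrbit d γ n).eval lam = (fun x => x ^ d + lam)^[n] γ := by
  simpa [paramOrbit] using (Semiconj.iterate_right (f := eval lam) (fun P => by simp) n) (C γ)

theorem isRoot_paramOrbit_succ_sub_iff {lam : R} :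
    (paramOrbit d γ (n + 1) - paramOrbit d γ n).IsRoot lam ↔
      IsFixedPt (fun x => x ^ d + lam) ((fun x => x ^ d + lam)^[n] γ) := by
  rw [IsRoot, eval_sub, sub_eq_zero, eval_paramOrbit, eval_paramOrbit, iterate_succ_apply']
  rfl

theorem derivative_paramOrbit_succ (hd : (d : R) = 0) :
    derivative (paramOrbit d γ (n + 1)) = 1 := by
  simp [paramOrbit_succ, derivative_pow, hd]

end CommRing

section IsDomain

variable {R : Type*} [CommRing R] [IsDomain R] {d : ℕ} (γ : R)

theorem natDegree_paramOrbit_succ (hd : 2 ≤ d) :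
    ∀ n, (paramOrbit d γ (n + 1)).natDegree = d ^ n
  | 0 => by rw [paramOrbit_succ, paramOrbit_zero, ← C_pow, add_comm, natDegree_X_add_C, pow_zero]
  | n + 1 => by
      have ih := natDegree_paramOrbit_succ hd n
      have hX : (X : R[X]).natDegree < (paramOrbit d γ (n + 1) ^ d).natDegree := by
        rw [natDegree_pow, ih, natDegree_X, ← pow_succ']
        exact Nat.one_lt_pow n.succ_ne_zero (by omega)
      rw [paramOrbit_succ, natDegree_add_eq_left_of_natDegree_lt hX, natDegree_pow, ih, pow_succ']

theorem natDegree_paramOrbit_lt (hd : 2 ≤ d) : ∀ n, (paramOrbit d γ n).natDegree < d ^ n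
  | 0 => by simp [paramOrbit_zero]
  | n + 1 => by
      rw [natDegree_paramOrbit_succ γ hd]
      exact Nat.pow_lt_pow_right (by omega) n.lt_succ_self

theorem natDegree_paramOrbit_succ_sub (hd : 2 ≤ d) (n : ℕ) :
    (paramOrbit d γ (n + 1) - paramOrbit d γ n).natDegree = d ^ n := by
  rw [natDegree_sub_eq_left_of_natDegree_lt, natDegree_paramOrbit_succ γ hd]
  rw [natDegree_paramOrbit_succ γ hd]
  exact natDegree_paramOrbit_lt γ hd n

end IsDomain

section IsAlgClosed

variable {K : Type*} [Field K] [IsAlgClosed K]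

theorem infinite_of_separable_rootSet_subset {S : Set K} {P : ℕ → K[X]}
    (hsep : ∀ n, (P n).Separable) (hdeg : Tendsto (fun n => (P n).natDegree) atTop atTop)
    (hS : ∀ n, (P n).rootSet K ⊆ S) : S.Infinite := by
  intro hfin
  obtain ⟨n, hn⟩ := (hdeg.eventually_gt_atTop S.ncard).exists
  have hle := Set.ncard_le_ncard (hS n) hfin
  rw [Set.ncard_eq_toFinset_card', Set.toFinset_card,
    card_rootSet_eq_natDegree (hsep n) (IsAlgClosed.splits _)] at hle
  omega

theorem exists_isRoot_pow_sub_pow_not_isRoot_sub {d : ℕ} (hd : (d : K) ≠ 0) {P Q : K[X]}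
    (hdeg : (P - Q).natDegree < (P ^ d - Q ^ d).natDegree)
    (hPQ : ∀ x, (P - Q).IsRoot x → P.eval x ≠ 0) :
    ∃ x, (P ^ d - Q ^ d).IsRoot x ∧ ¬ (P - Q).IsRoot x := by
  set G := ∑ i ∈ Finset.range d, P ^ i * Q ^ (d - 1 - i)
  have hfac : G * (P - Q) = P ^ d - Q ^ d := geom_sum₂_mul P Q d
  have hG : G.degree ≠ 0 := by
    have hne : P ^ d - Q ^ d ≠ 0 := by
      rintro h
      simp [h] at hdeg
    rw [← hfac] at hdeg hne
    rw [natDegree_mul (left_ne_zero_of_mul hne) (right_ne_zero_of_mul hne)] at hdeg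
    exact (natDegree_pos_iff_degree_pos.1 (by omega)).ne'
  obtain ⟨x, hx⟩ := IsAlgClosed.exists_root G hG
  refine ⟨x, by rw [← hfac, IsRoot, eval_mul, hx.eq_zero, zero_mul], fun hroot => ?_⟩
  have hPx : P.eval x = Q.eval x := sub_eq_zero.1 (by simpa using hroot)
  have hGx : G.eval x = d * P.eval x ^ (d - 1) := by
    simp [G, eval_finsetSum, hPx, geom_sum₂_self]
  exact mul_ne_zero hd (pow_ne_zero _ (hPQ x hroot)) (hGx ▸ hx.eq_zero)

end IsAlgClosed

end Polynomial

section Unicritical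

variable {K : Type*} [Field K] {d : ℕ}

theorem isPreperiodicPt_of_pow_char_pow_eq_self (p : ℕ) [Fact p.Prime] [CharP K p] {k : ℕ}
    (hk : k ≠ 0) {γ lam : K} (hγ : γ ^ p ^ k = γ) (hlam : lam ^ p ^ k = lam) :
    IsPreperiodicPt (fun x => x ^ d + lam) γ := by
  refine isPreperiodicPt_of_mapsTo (s := {x | x ^ p ^ k = x}) ?_ (fun x hx => ?_) hγ
  · have hne : (X ^ p ^ k - X : K[X]) ≠ 0 :=
      FiniteField.X_pow_card_pow_sub_X_ne_zero K hk (Fact.out : p.Prime).one_lt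
    simpa [sub_eq_zero] using finite_setOfPred_isRoot hne
  · change x ^ p ^ k = x at hx
    change (x ^ d + lam) ^ p ^ k = x ^ d + lam
    rw [add_pow_char_pow, pow_right_comm, hx, hlam]

variable [IsAlgClosed K]

theorem infinite_setOf_isPreperiodicPt_zero (p : ℕ) [Fact p.Prime] [CharP K p] :
    {lam : K | IsPreperiodicPt (fun x => x ^ d + lam) 0}.Infinite := by
  have hp : p.Prime := Fact.out
  refine infinite_of_separable_rootSet_subset (P := fun n => (X ^ p ^ (n + 1) - X : K[X]))
    (fun n => galois_poly_separable p _ (dvd_pow_self p n.succ_ne_zero)) ?_ (fun n lam hlam => ?_)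
  · have hdeg (n : ℕ) : (X ^ p ^ (n + 1) - X : K[X]).natDegree = p ^ (n + 1) :=
      FiniteField.X_pow_card_pow_sub_X_natDegree_eq K n.succ_ne_zero hp.one_lt
    simp only [hdeg]
    exact (tendsto_pow_atTop_atTop_of_one_lt hp.one_lt).comp (tendsto_add_atTop_nat 1)
  · refine isPreperiodicPt_of_pow_char_pow_eq_self p n.succ_ne_zero (zero_pow (pow_pos hp.pos _).ne') ?_
    simpa [sub_eq_zero] using (mem_rootSet.1 hlam).2

theorem infinite_setOf_isPreperiodicPt_of_natCast_eq_zero (hd : 2 ≤ d) (hdK : (d : K) = 0)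
    (γ : K) : {lam : K | IsPreperiodicPt (fun x => x ^ d + lam) γ}.Infinite := by
  refine infinite_of_separable_rootSet_subset (P := fun n => paramOrbit d γ (n + 1) - C γ)
    (fun n => ?_) ?_ (fun n lam hlam => ?_)
  · rw [separable_def, derivative_sub, derivative_C, sub_zero, derivative_paramOrbit_succ hdK]
    exact isCoprime_one_right
  · simp only [natDegree_sub_C, natDegree_paramOrbit_succ γ hd]
    exact tendsto_pow_atTop_atTop_of_one_lt (by omega)
  · have hγ : (paramOrbit d γ (n + 1)).eval lam = γ := by
      simpa [sub_eq_zero] using (mem_rootSet.1 hlam).2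
    exact ⟨0, n + 1, n.succ_pos, by rw [iterate_zero_apply, ← eval_paramOrbit, hγ]⟩

theorem exists_isFixedPt_iterate_succ_not_isFixedPt_iterate (hd : 2 ≤ d) (hdK : (d : K) ≠ 0)
    {γ : K} (hγ : γ ≠ 0) (n : ℕ) :
    ∃ lam : K, IsFixedPt (fun x => x ^ d + lam) ((fun x => x ^ d + lam)^[n + 1] γ) ∧
      ¬ IsFixedPt (fun x => x ^ d + lam) ((fun x => x ^ d + lam)^[n] γ) := by
  have hstep : paramOrbit d γ (n + 1 + 1) - paramOrbit d γ (n + 1) =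
      paramOrbit d γ (n + 1) ^ d - paramOrbit d γ n ^ d := by
    rw [paramOrbit_succ (n := n + 1), paramOrbit_succ (n := n)]
    ring
  have hdeg : (paramOrbit d γ (n + 1) - paramOrbit d γ n).natDegree <
      (paramOrbit d γ (n + 1) ^ d - paramOrbit d γ n ^ d).natDegree := by
    rw [← hstep, natDegree_paramOrbit_succ_sub γ hd, natDegree_paramOrbit_succ_sub γ hd]
    exact Nat.pow_lt_pow_right (by omega) n.lt_succ_self
  have hfix_ne_zero : ∀ lam, (paramOrbit d γ (n + 1) - paramOrbit d γ n).IsRoot lam →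
      (paramOrbit d γ (n + 1)).eval lam ≠ 0 := by
    intro lam hfix horbit
    rw [isRoot_paramOrbit_succ_sub_iff] at hfix
    rw [eval_paramOrbit, iterate_succ_apply', hfix.eq] at horbit
    have hlam : lam = 0 := by simpa [horbit, zero_pow (by omega : d ≠ 0)] using hfix.eq
    subst hlam
    simp only [add_zero, pow_iterate] at horbit
    exact hγ (pow_eq_zero_iff (by positivity) |>.1 horbit)
  obtain ⟨lam, hroot, hnew⟩ := exists_isRoot_pow_sub_pow_not_isRoot_sub hdK hdeg hfix_ne_zero
  rw [← hstep, isRoot_paramOrbit_succ_sub_iff] at hroot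
  rw [isRoot_paramOrbit_succ_sub_iff] at hnew
  exact ⟨lam, hroot, hnew⟩

theorem infinite_setOf_isPreperiodicPt_of_natCast_ne_zero (hd : 2 ≤ d) (hdK : (d : K) ≠ 0)
    {γ : K} (hγ : γ ≠ 0) : {lam : K | IsPreperiodicPt (fun x => x ^ d + lam) γ}.Infinite := by
  choose c hc using exists_isFixedPt_iterate_succ_not_isFixedPt_iterate hd hdK hγ
  refine Set.infinite_of_injective_forall_mem (fun m n hmn => ?_)
    (fun n => isPreperiodicPt_of_isFixedPt_iterate (hc n).1)
  by_contra hne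
  wlog hlt : m < n generalizing m n
  · exact this n m hmn.symm (Ne.symm hne) (by omega)
  have hfix := (hc m).1.iterate_of_le hlt
  rw [hmn] at hfix
  exact (hc n).2 hfix

theorem infinite_setOf_isPreperiodicPt (p : ℕ) [Fact p.Prime] [CharP K p] (γ : K) (hd : 2 ≤ d) :
    {lam : K | IsPreperiodicPt (fun x => x ^ d + lam) γ}.Infinite := by
  by_cases hdK : (d : K) = 0
  · exact infinite_setOf_isPreperiodicPt_of_natCast_eq_zero hd hdK γ
  rcases eq_or_ne γ 0 with rfl | hγ
  · exact infinite_setOf_isPreperiodicPt_zero p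
  · exact infinite_setOf_isPreperiodicPt_of_natCast_ne_zero hd hdK hγ

end Unicritical

/-- For any `γ` in a field `L` of characteristic `p`, there are infinitely many
parameters `λ` in the algebraic closure of `L` for which `γ` is preperiodic under
`f_λ(x) = x^d + λ`. -/
theorem infinitely_many_preperiodic_parameters
    (p : ℕ) [Fact p.Prime] (L : Type*) [Field L] [CharP L p]
    (γ : L) (d : ℕ) (hd : 2 ≤ d) :
    {lam : AlgebraicClosure L |
        ∃ m n : ℕ, m < n ∧
          (fun x : AlgebraicClosure L => x ^ d + lam)^[m] (algebraMap L (AlgebraicClosure L) γ)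
            = (fun x : AlgebraicClosure L => x ^ d + lam)^[n]
                (algebraMap L (AlgebraicClosure L) γ)}.Infinite :=
  infinite_setOf_isPreperiodicPt p (algebraMap L (AlgebraicClosure L) γ) hd
end

section
/- Let p be a prime, let L be a field of characteristic p with algebraic closure L̄, let d ≥ 2 be an integer, and let γ ∈ L be an element that is not algebraic over the prime field 𝔽_p. Then the set of λ ∈ L̄ for which there exists a prime number q with f_λ^q(γ) = γ (with γ viewed in L̄) is infinite; in particular, γ is periodic under f_λ for infinitely many λ ∈ L̄. -/
/-!
As a polynomial in `λ`, `f_λ^[n] γ - γ` is monic of degree `d ^ (n - 1)` with constant term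
`γ ^ d ^ n - γ`. For `n ≥ 2`, if its only root were the parameter `γ - γ ^ d` that makes `γ` a
fixed point, comparing constant terms would give `(γ ^ d - γ) ^ d ^ (n - 1) = γ ^ d ^ n - γ`, an
algebraic relation for `γ` over `𝔽_p`. Hence every prime `q` yields a parameter for which `γ` has
exact period `q`, and distinct primes yield distinct parameters.
-/

open Polynomial

section IterateParamPoly

variable {R : Type*} [CommRing R]

noncomputable def iterateParamPoly (d : ℕ) (g : R) : ℕ → R[X]
  | 0 => C g
  | n + 1 => iterateParamPoly d g n ^ d + X

theorem eval_iterateParamPoly (d : ℕ) (g lam : R) (n : ℕ) :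
    (iterateParamPoly d g n).eval lam = (fun x => x ^ d + lam)^[n] g := by
  induction n with
  | zero => simp [iterateParamPoly]
  | succ n ih => simp [iterateParamPoly, Function.iterate_succ_apply', ih]

theorem eval_zero_iterateParamPoly (d : ℕ) (g : R) (n : ℕ) :
    (iterateParamPoly d g n).eval 0 = g ^ d ^ n := by
  induction n with
  | zero => simp [iterateParamPoly]
  | succ n ih => simp [iterateParamPoly, ih, pow_succ, pow_mul]

theorem monic_and_natDegree_iterateParamPoly_succ [Nontrivial R] {d : ℕ} (hd : 2 ≤ d) (g : R) (n : ℕ) :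
    (iterateParamPoly d g (n + 1)).Monic ∧ (iterateParamPoly d g (n + 1)).natDegree = d ^ n := by
  induction n with
  | zero =>
    have h : iterateParamPoly d g 1 = X + C (g ^ d) := by
      simp [iterateParamPoly, add_comm]
    rw [h]
    exact ⟨monic_X_add_C _, natDegree_X_add_C _⟩
  | succ n ih =>
    obtain ⟨hmon, hdeg⟩ := ih
    have hmon_pow := hmon.pow d
    have hdeg_pow : (iterateParamPoly d g (n + 1) ^ d).natDegree = d ^ (n + 1) := by
      rw [hmon.natDegree_pow, hdeg, pow_succ']
    have hX : degree (X : R[X]) < degree (iterateParamPoly d g (n + 1) ^ d) := by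
      rw [degree_X, degree_eq_natDegree hmon_pow.ne_zero, hdeg_pow]
      exact_mod_cast Nat.one_lt_pow (Nat.succ_ne_zero n) hd
    exact ⟨hmon_pow.add_of_left hX, by
      rw [iterateParamPoly, natDegree_add_eq_left_of_degree_lt hX, hdeg_pow]⟩

end IterateParamPoly

theorem Polynomial.Splits.exists_isRoot_ne_of_eval_zero_ne {K : Type*} [Field K] {f : K[X]}
    (hf : f.Splits) (hm : f.Monic) {a : K} (h : f.eval 0 ≠ (-a) ^ f.natDegree) :
    ∃ r, f.IsRoot r ∧ r ≠ a := by
  by_contra! hroots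
  have hrep : f.roots = Multiset.replicate f.natDegree a :=
    Multiset.eq_replicate.mpr ⟨hf.natDegree_eq_card_roots.symm,
      fun r hr => hroots r (isRoot_of_mem_roots hr)⟩
  exact h (by simp [hf.eval_eq_prod_roots_of_monic hm, hrep])

theorem Transcendental.pow_sub_self_pow_ne {F K : Type*} [CommRing F] [Nontrivial F] [CommRing K]
    [Algebra F K] {g : K} (hg : Transcendental F g) {d m N : ℕ} (hd : d ≠ 0) (hm : m ≠ 1)
    (hN : 2 ≤ N) : (g ^ d - g) ^ N ≠ g ^ m - g := by
  intro h
  set S : F[X] := (X ^ d - X) ^ N - (X ^ m - X)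
  -- `S` has linear coefficient `1`, since `X ^ 2` divides `(X ^ d - X) ^ N`.
  obtain ⟨T, hT⟩ : (X : F[X]) ^ 2 ∣ (X ^ d - X) ^ N :=
    (pow_dvd_pow X hN).trans (pow_dvd_pow_of_dvd (dvd_sub (dvd_pow_self X hd) dvd_rfl) N)
  have hS : S.coeff 1 = 1 := by
    simp [S, hT, coeff_X_pow_mul', coeff_X_pow, hm.symm, coeff_X_one]
  refine hg ⟨S, fun h0 => by simp [h0] at hS, ?_⟩
  simp [S, h]

theorem exists_param_isPeriodicPt_ne_fixed {F K : Type*} [CommRing F] [Nontrivial F] [Field K]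
    [IsAlgClosed K] [Algebra F K] {g : K} (hg : Transcendental F g) {d q : ℕ} (hd : 2 ≤ d)
    (hq : 2 ≤ q) :
    ∃ lam : K, lam ≠ g - g ^ d ∧ Function.IsPeriodicPt (fun x => x ^ d + lam) q g := by
  obtain ⟨n, rfl⟩ : ∃ n, q = n + 1 := ⟨q - 1, by omega⟩
  obtain ⟨hmon, hdeg⟩ := monic_and_natDegree_iterateParamPoly_succ hd g n
  set P := iterateParamPoly d g (n + 1) - C g
  have hPmon : P.Monic := hmon.sub_of_left <| degree_C_le.trans_lt <| by
    rw [degree_eq_natDegree hmon.ne_zero, hdeg]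
    exact_mod_cast Nat.pos_of_ne_zero (pow_ne_zero n (by omega))
  have hP0 : P.eval 0 ≠ (-(g - g ^ d)) ^ P.natDegree := by
    rw [natDegree_sub_C, hdeg, neg_sub]
    simpa [P, eval_zero_iterateParamPoly] using
      (hg.pow_sub_self_pow_ne (by omega) (Nat.one_lt_pow (by omega) hd).ne'
        (hd.trans (Nat.le_self_pow (by omega) d))).symm
  obtain ⟨lam, hroot, hne⟩ := (IsAlgClosed.splits P).exists_isRoot_ne_of_eval_zero_ne hPmon hP0
  refine ⟨lam, hne, ?_⟩
  simpa [P, Function.IsPeriodicPt, Function.IsFixedPt, eval_iterateParamPoly, sub_eq_zero]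
    using hroot

theorem Function.IsPeriodicPt.isFixedPt_of_coprime {α : Type*} {f : α → α} {x : α} {m n : ℕ}
    (hm : Function.IsPeriodicPt f m x) (hn : Function.IsPeriodicPt f n x) (hmn : m.Coprime n) :
    Function.IsFixedPt f x := by
  simpa [hmn.gcd_eq_one, Function.IsPeriodicPt] using hm.gcd hn

theorem infinitely_many_prime_periodic_parameters_general
    (p : ℕ) (L : Type*) [Field L] [Algebra (ZMod p) L]
    (γ : L) (d : ℕ) (hd : 2 ≤ d) (hγ : ¬ IsAlgebraic (ZMod p) γ) :
    {lam : AlgebraicClosure L |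
        ∃ q : ℕ, q.Prime ∧
          (fun x : AlgebraicClosure L => x ^ d + lam)^[q] (algebraMap L (AlgebraicClosure L) γ)
            = algebraMap L (AlgebraicClosure L) γ}.Infinite ∧
    {lam : AlgebraicClosure L |
        ∃ n : ℕ, 0 < n ∧
          (fun x : AlgebraicClosure L => x ^ d + lam)^[n] (algebraMap L (AlgebraicClosure L) γ)
            = algebraMap L (AlgebraicClosure L) γ}.Infinite := by
  have := (algebraMap (ZMod p) L).domain_nontrivial
  have hg : Transcendental (ZMod p) (algebraMap L (AlgebraicClosure L) γ) :=
    fun h => hγ ((isAlgebraic_algebraMap_iff (algebraMap L _).injective).mp h)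
  choose lamOf hne hper using
    fun q : Nat.Primes => exists_param_isPeriodicPt_ne_fixed hg hd q.2.two_le
  -- A parameter of two distinct prime periods would make `γ` a fixed point.
  have hinj : Function.Injective lamOf := by
    intro q q' h
    by_contra hqq'
    have hcop : (q : ℕ).Coprime q' := (Nat.coprime_primes q.2 q'.2).mpr (hqq' <| Subtype.ext ·)
    have hfix := (hper q).isFixedPt_of_coprime (h ▸ hper q') hcop
    exact hne q (eq_sub_of_add_eq' hfix)
  exact ⟨Set.infinite_of_injective_forall_mem hinj fun q => ⟨q, q.2, hper q⟩,
    Set.infinite_of_injective_forall_mem hinj fun q => ⟨q, q.2.pos, hper q⟩⟩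

/-- If `γ ∈ L` (char `p`) is not algebraic over `𝔽_p`, then there are infinitely
many parameters `λ` in the algebraic closure of `L` for which `f_λ^q(γ) = γ` for some prime
`q`; in particular, `γ` is periodic under `f_λ` for infinitely many `λ`. -/
theorem infinitely_many_prime_periodic_parameters
    (p : ℕ) [Fact p.Prime] (L : Type*) [Field L] [CharP L p] [Algebra (ZMod p) L]
    (γ : L) (d : ℕ) (hd : 2 ≤ d) (hγ : ¬ IsAlgebraic (ZMod p) γ) :
    {lam : AlgebraicClosure L |
        ∃ q : ℕ, q.Prime ∧
          (fun x : AlgebraicClosure L => x ^ d + lam)^[q] (algebraMap L (AlgebraicClosure L) γ)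
            = algebraMap L (AlgebraicClosure L) γ}.Infinite ∧
    {lam : AlgebraicClosure L |
        ∃ n : ℕ, 0 < n ∧
          (fun x : AlgebraicClosure L => x ^ d + lam)^[n] (algebraMap L (AlgebraicClosure L) γ)
            = algebraMap L (AlgebraicClosure L) γ}.Infinite :=
  infinitely_many_prime_periodic_parameters_general p L γ d hd hγ
end
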